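/- Let G : ℤ^d → [0,∞) satisfy G(x) ≤ δ_{0,x} + θ_0 ⟨x⟩^{−q} for some θ_0 > 0 and q ∈ (d/2, d), and let D(x) = c L^{−d} 1[0 < ‖x‖_∞ ≤ L] be the uniform spread-out step distribution (c a normalizing constant). Suppose θ_0 L^{d−q} ≥ ε > 0. Then there is a constant K = K(d,q,ε) independent of L such that ∑_{y ≠ x} D(y) G(x − y) ≤ K θ_0 ⟨x⟩^{−q} for all x ∈ ℤ^d. -/

import Mathlib

open scoped BigOperators

/-- `⟨z⟩ = max (|z|, 1)` with `|z|` the Euclidean norm of `z ∈ ℤ^d`. -/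
noncomputable def jnorm {d : ℕ} (z : Fin d → ℤ) : ℝ :=
  max (Real.sqrt (∑ i, ((z i : ℝ)) ^ 2)) 1

/-- The uniform spread-out step distribution `D(x) = c L^{−d} 1[0 < ‖x‖_∞ ≤ L]`, i.e.
the uniform distribution on the `(2L+1)^d − 1` nonzero points `x` with `‖x‖_∞ ≤ L`. -/
noncomputable def Dunif (d L : ℕ) (x : Fin d → ℤ) : ℝ :=
  if x ≠ 0 ∧ ∀ i, |x i| ≤ (L : ℤ) then ((2 * (L : ℝ) + 1) ^ d - 1)⁻¹ else 0

section aux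
open Finset

noncomputable def ev {d : ℕ} (z : Fin d → ℤ) : EuclideanSpace ℝ (Fin d) := WithLp.toLp 2 (fun i => (z i : ℝ))

lemma ev_sub {d : ℕ} (x y : Fin d → ℤ) : ev (x - y) = ev x - ev y := by
  ext i; simp [ev]

lemma jnorm_eq {d : ℕ} (z : Fin d → ℤ) : jnorm z = max ‖ev z‖ 1 := by
  rw [jnorm, EuclideanSpace.norm_eq]
  congr 2
  apply Finset.sum_congr rfl
  intro i _
  simp [ev, sq_abs]

lemma one_le_jnorm {d : ℕ} (z : Fin d → ℤ) : 1 ≤ jnorm z := le_max_right _ _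

lemma jnorm_pos {d : ℕ} (z : Fin d → ℤ) : 0 < jnorm z := lt_of_lt_of_le one_pos (one_le_jnorm z)

lemma norm_ev_le_jnorm {d : ℕ} (z : Fin d → ℤ) : ‖ev z‖ ≤ jnorm z := by
  rw [jnorm_eq]; exact le_max_left _ _

lemma jnorm_zero {d : ℕ} : jnorm (0 : Fin d → ℤ) = 1 := by
  simp [jnorm]

lemma abs_coord_le_norm_ev {d : ℕ} (z : Fin d → ℤ) (i : Fin d) : (|z i| : ℝ) ≤ ‖ev z‖ := by
  rw [EuclideanSpace.norm_eq]
  rw [show (|z i| : ℝ) = Real.sqrt (‖ev z i‖ ^ 2) by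
    rw [Real.sqrt_sq_eq_abs]; simp [ev]]
  apply Real.sqrt_le_sqrt
  exact Finset.single_le_sum (f := fun j => ‖ev z j‖ ^ 2) (fun j _ => sq_nonneg _) (mem_univ i)
lemma powsum_le (a : ℝ) (ha : -1 < a) (M : ℕ) :
    ∑ k ∈ Finset.Icc 1 M, (k : ℝ) ^ a ≤ max 1 (a + 1)⁻¹ * (M : ℝ) ^ (a + 1) := by
  have hp : 0 < a + 1 := by linarith
  rcases le_or_gt 0 a with ha0 | ha0
  · rcases Nat.eq_zero_or_pos M with rfl | hM
    · simpa using Real.rpow_nonneg le_rfl (a + 1)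
    have h1 : ∑ k ∈ Finset.Icc 1 M, (k : ℝ) ^ a ≤ ∑ k ∈ Finset.Icc 1 M, (M : ℝ) ^ a := by
      apply Finset.sum_le_sum
      intro k hk
      rw [Finset.mem_Icc] at hk
      exact Real.rpow_le_rpow (by positivity) (by exact_mod_cast hk.2) ha0
    calc ∑ k ∈ Finset.Icc 1 M, (k : ℝ) ^ a ≤ ∑ k ∈ Finset.Icc 1 M, (M : ℝ) ^ a := h1
      _ = (M : ℝ) * (M : ℝ) ^ a := by
          rw [Finset.sum_const, Nat.card_Icc]; simp [nsmul_eq_mul]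
      _ = (M : ℝ) ^ (a + 1) := by
          rw [Real.rpow_add (by exact_mod_cast hM), Real.rpow_one]; ring
      _ ≤ max 1 (a + 1)⁻¹ * (M : ℝ) ^ (a + 1) := by
          nth_rewrite 1 [← one_mul ((M : ℝ) ^ (a + 1))]
          exact mul_le_mul_of_nonneg_right (le_max_left _ _) (Real.rpow_nonneg (Nat.cast_nonneg M) _)
  · have key : ∑ k ∈ Finset.Icc 1 M, (k : ℝ) ^ a ≤ (a + 1)⁻¹ * (M : ℝ) ^ (a + 1) := by
      induction M with
      | zero => simp [Real.zero_rpow (ne_of_gt hp)]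
      | succ M ih =>
        rw [Finset.sum_Icc_succ_top (by omega)]
        have ht : (1 : ℝ) ≤ (M : ℝ) + 1 := by linarith [Nat.cast_nonneg (α := ℝ) M]
        have htpos : (0 : ℝ) < (M : ℝ) + 1 := by positivity
        have hinv : ((M : ℝ) + 1)⁻¹ ≤ 1 := by
          rw [inv_le_one_iff₀]; right; exact ht
        have hbern : (1 + (-(((M : ℝ) + 1)⁻¹))) ^ (a + 1) ≤ 1 + (a + 1) * (-(((M : ℝ) + 1)⁻¹)) :=
          rpow_one_add_le_one_add_mul_self (by linarith) (le_of_lt hp) (by linarith)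
        have hmain : (a + 1) * ((M : ℝ) + 1) ^ a ≤ ((M : ℝ) + 1) ^ (a + 1) - (M : ℝ) ^ (a + 1) := by
          have hMeq : (M : ℝ) = ((M : ℝ) + 1) * (1 + (-(((M : ℝ) + 1)⁻¹))) := by
            field_simp
            ring
          have h2 : (M : ℝ) ^ (a + 1) ≤ ((M : ℝ) + 1) ^ (a + 1) * (1 + (a + 1) * (-(((M : ℝ) + 1)⁻¹))) := by
            calc (M : ℝ) ^ (a + 1)
                = (((M : ℝ) + 1) * (1 + (-(((M : ℝ) + 1)⁻¹)))) ^ (a + 1) := by rw [← hMeq]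
              _ = ((M : ℝ) + 1) ^ (a + 1) * (1 + (-(((M : ℝ) + 1)⁻¹))) ^ (a + 1) :=
                  Real.mul_rpow (le_of_lt htpos) (by linarith)
              _ ≤ ((M : ℝ) + 1) ^ (a + 1) * (1 + (a + 1) * (-(((M : ℝ) + 1)⁻¹))) :=
                  mul_le_mul_of_nonneg_left hbern (Real.rpow_nonneg (le_of_lt htpos) _)
          have h3 : ((M : ℝ) + 1) ^ (a + 1) * (((M : ℝ) + 1)⁻¹) = ((M : ℝ) + 1) ^ a := by
            rw [← Real.rpow_neg_one ((M : ℝ) + 1), ← Real.rpow_add htpos]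
            norm_num
          nlinarith [h2, h3]
        have hstep : ((M : ℝ) + 1) ^ a ≤ (a + 1)⁻¹ * (((M : ℝ) + 1) ^ (a + 1) - (M : ℝ) ^ (a + 1)) := by
          calc ((M : ℝ) + 1) ^ a = (a + 1)⁻¹ * ((a + 1) * ((M : ℝ) + 1) ^ a) := by
                field_simp
            _ ≤ (a + 1)⁻¹ * (((M : ℝ) + 1) ^ (a + 1) - (M : ℝ) ^ (a + 1)) :=
                mul_le_mul_of_nonneg_left hmain (le_of_lt (inv_pos.mpr hp))
        push_cast
        linarith [ih, hstep]
    calc ∑ k ∈ Finset.Icc 1 M, (k : ℝ) ^ a ≤ (a + 1)⁻¹ * (M : ℝ) ^ (a + 1) := key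
      _ ≤ max 1 (a + 1)⁻¹ * (M : ℝ) ^ (a + 1) :=
          mul_le_mul_of_nonneg_right (le_max_right _ _) (Real.rpow_nonneg (Nat.cast_nonneg M) _)
noncomputable def Box (d R : ℕ) : Finset (Fin d → ℤ) :=
  Finset.Icc (fun _ => -(R : ℤ)) (fun _ => (R : ℤ))

lemma mem_Box {d R : ℕ} {y : Fin d → ℤ} : y ∈ Box d R ↔ ∀ i, |y i| ≤ (R : ℤ) := by
  simp only [Box, Finset.mem_Icc, Pi.le_def]
  constructor
  · intro ⟨h1, h2⟩ i; rw [abs_le]; exact ⟨h1 i, h2 i⟩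
  · intro h; exact ⟨fun i => (abs_le.mp (h i)).1, fun i => (abs_le.mp (h i)).2⟩

lemma card_Box (d R : ℕ) : (Box d R).card = (2 * R + 1) ^ d := by
  rw [Box, Pi.card_Icc]
  simp only [Int.card_Icc]
  rw [Finset.prod_const, Finset.card_univ, Fintype.card_fin]
  congr 1
  omega

lemma Box_mono {d : ℕ} {R R' : ℕ} (h : R ≤ R') : Box d R ⊆ Box d R' := by
  intro y hy
  rw [mem_Box] at *
  intro i
  exact le_trans (hy i) (by exact_mod_cast h)

lemma zero_mem_Box (d R : ℕ) : (0 : Fin d → ℤ) ∈ Box d R := by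
  rw [mem_Box]; intro i; simp

-- lattice sum bound
lemma lattice_sum_le (d : ℕ) (hd : 1 ≤ d) (q : ℝ) (hq0 : 0 < q) (hqd : q < d) :
    ∀ M : ℕ, 1 ≤ M →
      ∑ z ∈ Box d M, jnorm z ^ (-q) ≤
        (1 + (2 * d * 3 ^ (d - 1)) * max 1 ((d : ℝ) - q)⁻¹) * (M : ℝ) ^ ((d : ℝ) - q) := by
  have key : ∀ M : ℕ, ∑ z ∈ Box d M, jnorm z ^ (-q) ≤
      1 + (2 * d * 3 ^ (d - 1) : ℝ) * ∑ k ∈ Finset.Icc 1 M, (k : ℝ) ^ ((d : ℝ) - 1 - q) := by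
    intro M
    induction M with
    | zero =>
      have : Box d 0 = {0} := by
        apply Finset.eq_singleton_iff_unique_mem.mpr
        refine ⟨zero_mem_Box d 0, fun y hy => ?_⟩
        rw [mem_Box] at hy
        funext i
        have := hy i
        simp at this
        simp [this]
      rw [this]
      simp [jnorm_zero]
    | succ M ih =>
      have hsub : Box d M ⊆ Box d (M + 1) := Box_mono (by omega)
      rw [← Finset.sum_sdiff hsub]
      have hshell_card : ((Box d (M + 1) \ Box d M).card : ℝ) ≤
          2 * d * 3 ^ (d - 1) * ((M : ℝ) + 1) ^ (d - 1) := by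
        rw [Finset.card_sdiff_of_subset hsub, card_Box, card_Box]
        have hle : (2 * M + 1) ^ d ≤ (2 * (M + 1) + 1) ^ d :=
          Nat.pow_le_pow_left (by omega) d
        rw [Nat.cast_sub hle]
        push_cast
        set A : ℝ := 2 * (M : ℝ) + 3 with hA
        set B : ℝ := 2 * (M : ℝ) + 1 with hB
        have hBA : B ≤ A := by rw [hA, hB]; linarith
        have hB0 : (0 : ℝ) ≤ B := by positivity
        have hgeom : A ^ d - B ^ d = (∑ i ∈ Finset.range d, A ^ i * B ^ (d - 1 - i)) * (A - B) := by
          rw [geom_sum₂_mul]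
        have hAB : A - B = 2 := by rw [hA, hB]; ring
        have hterm : ∀ i ∈ Finset.range d, A ^ i * B ^ (d - 1 - i) ≤ A ^ (d - 1) := by
          intro i hi
          rw [Finset.mem_range] at hi
          calc A ^ i * B ^ (d - 1 - i) ≤ A ^ i * A ^ (d - 1 - i) := by
                apply mul_le_mul_of_nonneg_left (pow_le_pow_left₀ hB0 hBA _) (by positivity)
            _ = A ^ (d - 1) := by
                rw [← pow_add]; congr 1; omega
        have hsum : ∑ i ∈ Finset.range d, A ^ i * B ^ (d - 1 - i) ≤ d * A ^ (d - 1) := by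
          calc ∑ i ∈ Finset.range d, A ^ i * B ^ (d - 1 - i)
              ≤ ∑ i ∈ Finset.range d, A ^ (d - 1) := Finset.sum_le_sum hterm
            _ = d * A ^ (d - 1) := by rw [Finset.sum_const, Finset.card_range, nsmul_eq_mul]
        have hA3 : A ≤ 3 * ((M : ℝ) + 1) := by rw [hA]; linarith
        have hApow : A ^ (d - 1) ≤ 3 ^ (d - 1) * ((M : ℝ) + 1) ^ (d - 1) := by
          rw [← mul_pow]
          exact pow_le_pow_left₀ (by positivity) hA3 _
        have h2M1 : (2 * (M : ℝ) + 2 + 1) = A := by rw [hA]; ring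
        rw [show (2 * ((M : ℝ) + 1) + 1) ^ d - (2 * (M : ℝ) + 1) ^ d = A ^ d - B ^ d by
          rw [hA, hB]; ring_nf]
        rw [hgeom, hAB]
        calc (∑ i ∈ Finset.range d, A ^ i * B ^ (d - 1 - i)) * 2
            ≤ (d * A ^ (d - 1)) * 2 := by
              apply mul_le_mul_of_nonneg_right hsum (by norm_num)
          _ ≤ (d * (3 ^ (d - 1) * ((M : ℝ) + 1) ^ (d - 1))) * 2 := by
              apply mul_le_mul_of_nonneg_right _ (by norm_num)
              exact mul_le_mul_of_nonneg_left hApow (by positivity)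
          _ = 2 * d * 3 ^ (d - 1) * ((M : ℝ) + 1) ^ (d - 1) := by ring
      have hshell_term : ∀ z ∈ Box d (M + 1) \ Box d M, jnorm z ^ (-q) ≤ ((M : ℝ) + 1) ^ (-q) := by
        intro z hz
        rw [Finset.mem_sdiff, mem_Box] at hz
        obtain ⟨_, hz2⟩ := hz
        rw [mem_Box] at hz2
        push_neg at hz2
        obtain ⟨i, hi⟩ := hz2
        have h1 : ((M : ℝ) + 1) ≤ jnorm z := by
          have h2 : ((M : ℤ) + 1 : ℤ) ≤ |z i| := by omega
          have h3 : ((M : ℝ) + 1) ≤ (|z i| : ℝ) := by exact_mod_cast h2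
          calc ((M : ℝ) + 1) ≤ (|z i| : ℝ) := h3
            _ ≤ ‖ev z‖ := abs_coord_le_norm_ev z i
            _ ≤ jnorm z := norm_ev_le_jnorm z
        apply Real.rpow_le_rpow_of_nonpos (by positivity) h1 (by linarith)
      have hshell : ∑ z ∈ Box d (M + 1) \ Box d M, jnorm z ^ (-q) ≤
          (2 * d * 3 ^ (d - 1) : ℝ) * ((M : ℝ) + 1) ^ ((d : ℝ) - 1 - q) := by
        calc ∑ z ∈ Box d (M + 1) \ Box d M, jnorm z ^ (-q)
            ≤ ∑ _z ∈ Box d (M + 1) \ Box d M, ((M : ℝ) + 1) ^ (-q) :=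
              Finset.sum_le_sum hshell_term
          _ = ((Box d (M + 1) \ Box d M).card : ℝ) * ((M : ℝ) + 1) ^ (-q) := by
              rw [Finset.sum_const, nsmul_eq_mul]
          _ ≤ (2 * d * 3 ^ (d - 1) * ((M : ℝ) + 1) ^ (d - 1)) * ((M : ℝ) + 1) ^ (-q) := by
              apply mul_le_mul_of_nonneg_right hshell_card (Real.rpow_nonneg (by positivity) _)
          _ = (2 * d * 3 ^ (d - 1) : ℝ) * ((M : ℝ) + 1) ^ ((d : ℝ) - 1 - q) := by
              rw [mul_assoc]
              congr 1
              rw [← Real.rpow_natCast ((M : ℝ) + 1) (d - 1), ← Real.rpow_add (by positivity)]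
              congr 1
              have : ((d - 1 : ℕ) : ℝ) = (d : ℝ) - 1 := by
                have : 1 ≤ d := hd
                push_cast [this]
                ring
              rw [this]
              ring
      rw [Finset.sum_Icc_succ_top (by omega : 1 ≤ M + 1)]
      push_cast
      calc (∑ z ∈ Box d (M + 1) \ Box d M, jnorm z ^ (-q)) + ∑ z ∈ Box d M, jnorm z ^ (-q)
          ≤ (2 * d * 3 ^ (d - 1) : ℝ) * ((M : ℝ) + 1) ^ ((d : ℝ) - 1 - q)
            + (1 + (2 * d * 3 ^ (d - 1) : ℝ) * ∑ k ∈ Finset.Icc 1 M, (k : ℝ) ^ ((d : ℝ) - 1 - q)) :=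
            add_le_add hshell ih
        _ = 1 + (2 * d * 3 ^ (d - 1) : ℝ) *
            ((∑ k ∈ Finset.Icc 1 M, (k : ℝ) ^ ((d : ℝ) - 1 - q)) + ((M : ℝ) + 1) ^ ((d : ℝ) - 1 - q)) := by
            ring
  intro M hM
  have ha : -1 < (d : ℝ) - 1 - q := by
    have : (q : ℝ) < d := hqd
    linarith
  have hps := powsum_le ((d : ℝ) - 1 - q) ha M
  have hdq : (d : ℝ) - 1 - q + 1 = (d : ℝ) - q := by ring
  rw [hdq] at hps
  have hM1 : (1 : ℝ) ≤ (M : ℝ) ^ ((d : ℝ) - q) := by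
    apply Real.one_le_rpow (by exact_mod_cast hM) (by linarith)
  calc ∑ z ∈ Box d M, jnorm z ^ (-q)
      ≤ 1 + (2 * d * 3 ^ (d - 1) : ℝ) * ∑ k ∈ Finset.Icc 1 M, (k : ℝ) ^ ((d : ℝ) - 1 - q) := key M
    _ ≤ 1 + (2 * d * 3 ^ (d - 1) : ℝ) * (max 1 ((d : ℝ) - q)⁻¹ * (M : ℝ) ^ ((d : ℝ) - q)) := by
        have : (0 : ℝ) ≤ 2 * d * 3 ^ (d - 1) := by positivity
        have := mul_le_mul_of_nonneg_left hps this
        linarith [this]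
    _ ≤ (1 + (2 * d * 3 ^ (d - 1)) * max 1 ((d : ℝ) - q)⁻¹) * (M : ℝ) ^ ((d : ℝ) - q) := by
        have h1 : (0 : ℝ) ≤ (2 * d * 3 ^ (d - 1) : ℝ) * max 1 ((d : ℝ) - q)⁻¹ := by positivity
        nlinarith [hM1]

end aux

set_option maxHeartbeats 1000000 in
/-- if `G : ℤ^d → [0,∞)` satisfies `G x ≤ δ_{0,x} + θ_0 ⟨x⟩^{−q}` with
`q ∈ (d/2, d)`, `D` is the uniform spread-out distribution with range `L ≥ 1`, and
`θ_0 L^{d−q} ≥ ε > 0`, then there is `K = K(d,q,ε)` independent of `L` with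
`∑_{y ≠ x} D(y) G(x − y) ≤ K θ_0 ⟨x⟩^{−q}` for all `x`. -/
theorem spread_out_convolution_bound
    (d : ℕ) (hd : 1 ≤ d) (q ε : ℝ) (hq1 : (d : ℝ) / 2 < q) (hq2 : q < d) (hε : 0 < ε) :
    ∃ K : ℝ, ∀ L : ℕ, 1 ≤ L → ∀ θ0 : ℝ, 0 < θ0 →
      ε ≤ θ0 * (L : ℝ) ^ ((d : ℝ) - q) →
      ∀ G : (Fin d → ℤ) → ℝ, (∀ x, 0 ≤ G x) →
        (∀ x, G x ≤ (if x = 0 then 1 else 0) + θ0 * jnorm x ^ (-q)) →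
        ∀ x : Fin d → ℤ,
          (∑' y : Fin d → ℤ, if y ≠ x then Dunif d L y * G (x - y) else 0)
            ≤ K * θ0 * jnorm x ^ (-q) := by
  have hd1 : (1 : ℝ) ≤ (d : ℝ) := by exact_mod_cast hd
  have hq0 : 0 < q := lt_of_le_of_lt (by linarith) hq1
  set s : ℝ := Real.sqrt d with hs
  have hs1 : 1 ≤ s := by
    rw [hs, show (1 : ℝ) = Real.sqrt 1 by simp]
    exact Real.sqrt_le_sqrt hd1
  have hs0 : 0 < s := lt_of_lt_of_le one_pos hs1
  set m : ℕ := Nat.ceil (2 * s) + 1 with hm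
  set CS : ℝ := 1 + (2 * d * 3 ^ (d - 1)) * max 1 ((d : ℝ) - q)⁻¹ with hCS
  have hCS0 : 0 < CS := by
    have h1 : (0 : ℝ) ≤ (2 * d * 3 ^ (d - 1)) * max 1 ((d : ℝ) - q)⁻¹ :=
      mul_nonneg (by positivity) (le_trans zero_le_one (le_max_left _ _))
    rw [hCS]; linarith
  set KA : ℝ := (3 / 2 : ℝ) * (2 : ℝ) ^ (-(d : ℝ)) * (m : ℝ) ^ ((d : ℝ) - q) * CS * (2 * s) ^ q
    with hKA
  have hKA0 : 0 ≤ KA := by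
    rw [hKA]
    have h1 : (0:ℝ) ≤ (2 : ℝ) ^ (-(d : ℝ)) := Real.rpow_nonneg (by norm_num) _
    have h2 : (0:ℝ) ≤ (m : ℝ) ^ ((d : ℝ) - q) := Real.rpow_nonneg (Nat.cast_nonneg m) _
    have h3 : (0:ℝ) ≤ (2 * s) ^ q := Real.rpow_nonneg (by positivity) _
    have := hCS0.le
    positivity
  have h2q : (0:ℝ) ≤ (3 / 2) * (2 : ℝ) ^ q := by
    have : (0:ℝ) ≤ (2 : ℝ) ^ q := Real.rpow_nonneg (by norm_num) _
    positivity
  refine ⟨KA + (3 / 2) * (2 : ℝ) ^ q, ?_⟩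
  intro L hL θ0 hθ0 _ G hG0 hGb x
  have hLr : (0 : ℝ) < (L : ℝ) := by exact_mod_cast hL
  have hLr1 : (1 : ℝ) ≤ (L : ℝ) := by exact_mod_cast hL
  have hX3 : (3 : ℝ) ≤ (2 * (L : ℝ) + 1) ^ d := by
    calc (3 : ℝ) = 3 ^ 1 := by norm_num
      _ ≤ (3 : ℝ) ^ d := pow_le_pow_right₀ (by norm_num) hd
      _ ≤ (2 * (L : ℝ) + 1) ^ d := pow_le_pow_left₀ (by norm_num) (by linarith) d
  have hXpos : (0 : ℝ) < (2 * (L : ℝ) + 1) ^ d := by positivity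
  have hD : ∀ y, Dunif d L y ≤ (3 / 2) * ((2 * (L : ℝ) + 1) ^ d)⁻¹ := by
    intro y
    rw [Dunif]
    split
    · have h1 : (2 / 3 : ℝ) * (2 * (L : ℝ) + 1) ^ d ≤ (2 * (L : ℝ) + 1) ^ d - 1 := by linarith
      have h2 : (0 : ℝ) < (2 / 3 : ℝ) * (2 * (L : ℝ) + 1) ^ d := by positivity
      calc ((2 * (L : ℝ) + 1) ^ d - 1)⁻¹ ≤ ((2 / 3 : ℝ) * (2 * (L : ℝ) + 1) ^ d)⁻¹ :=
            inv_anti₀ h2 h1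
        _ = (3 / 2) * ((2 * (L : ℝ) + 1) ^ d)⁻¹ := by
            rw [mul_inv]; ring
    · positivity
  have hDnn : ∀ y, 0 ≤ Dunif d L y := by
    intro y
    rw [Dunif]
    split
    · have h1 : (0:ℝ) ≤ (2 * (L : ℝ) + 1) ^ d - 1 := by linarith
      positivity
    · exact le_refl _
  have hjx : 0 < jnorm x := jnorm_pos x
  have hjxq : 0 ≤ jnorm x ^ (-q) := Real.rpow_nonneg hjx.le _
  have htsum : (∑' y : Fin d → ℤ, if y ≠ x then Dunif d L y * G (x - y) else 0)
      = ∑ y ∈ Box d L, (if y ≠ x then Dunif d L y * G (x - y) else 0) := by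
    apply tsum_eq_sum
    intro y hy
    have hD0 : Dunif d L y = 0 := by
      rw [Dunif, if_neg]
      intro hc
      exact hy (mem_Box.mpr hc.2)
    split <;> simp [hD0]
  rw [htsum]
  rcases le_or_gt (jnorm x) (2 * s * (L : ℝ)) with hcase | hcase
  · -- Case A : small x
    have hterm : ∀ y ∈ Box d L, (if y ≠ x then Dunif d L y * G (x - y) else 0)
        ≤ (3 / 2) * ((2 * (L : ℝ) + 1) ^ d)⁻¹ * (θ0 * jnorm (x - y) ^ (-q)) := by
      intro y _
      have hrpnn : (0:ℝ) ≤ jnorm (x - y) ^ (-q) := Real.rpow_nonneg (jnorm_pos _).le _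
      split
      case isTrue hyx =>
        have hxy0 : x - y ≠ 0 := sub_ne_zero.mpr (Ne.symm hyx)
        have hGxy : G (x - y) ≤ θ0 * jnorm (x - y) ^ (-q) := by
          have h0 := hGb (x - y)
          rw [if_neg hxy0] at h0
          linarith
        exact mul_le_mul (hD y) hGxy (hG0 _) (by positivity)
      case isFalse _ =>
        have h1 : (0:ℝ) ≤ θ0 * jnorm (x - y) ^ (-q) := mul_nonneg hθ0.le hrpnn
        have h2 : (0:ℝ) ≤ (3 / 2) * ((2 * (L : ℝ) + 1) ^ d)⁻¹ := by positivity
        exact mul_nonneg h2 h1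
    have hxi : ∀ i, |x i| ≤ ((Nat.ceil (2 * s) * L : ℕ) : ℤ) := by
      intro i
      have h1 := abs_coord_le_norm_ev x i
      have h2 : ‖ev x‖ ≤ 2 * s * (L : ℝ) := le_trans (norm_ev_le_jnorm x) hcase
      have h3 : 2 * s * (L : ℝ) ≤ (Nat.ceil (2 * s) : ℝ) * (L : ℝ) :=
        mul_le_mul_of_nonneg_right (Nat.le_ceil _) hLr.le
      have h4 : |((x i : ℤ) : ℝ)| ≤ ((Nat.ceil (2 * s) * L : ℕ) : ℝ) := by
        push_cast
        linarith
      exact_mod_cast h4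
    have himg : ∑ y ∈ Box d L, jnorm (x - y) ^ (-q) ≤ ∑ z ∈ Box d (m * L), jnorm z ^ (-q) := by
      have hinj : ∀ a ∈ Box d L, ∀ b ∈ Box d L, x - a = x - b → a = b := by
        intro a _ b _ hab
        have := sub_right_inj.mp hab
        exact this
      have heq : ∑ z ∈ (Box d L).image (fun y => x - y), jnorm z ^ (-q)
          = ∑ y ∈ Box d L, jnorm (x - y) ^ (-q) := Finset.sum_image hinj
      rw [← heq]
      apply Finset.sum_le_sum_of_subset_of_nonneg
      · intro z hz
        rw [Finset.mem_image] at hz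
        obtain ⟨y, hy, rfl⟩ := hz
        rw [mem_Box] at hy ⊢
        intro i
        calc |(x - y) i| = |x i - y i| := rfl
          _ ≤ |x i| + |y i| := abs_sub _ _
          _ ≤ ((Nat.ceil (2 * s) * L : ℕ) : ℤ) + (L : ℤ) := add_le_add (hxi i) (hy i)
          _ ≤ ((m * L : ℕ) : ℤ) := by
              rw [hm]
              push_cast
              ring_nf
              omega
      · intro z _ _
        exact Real.rpow_nonneg (jnorm_pos _).le _
    have hmL1 : 1 ≤ m * L := Nat.one_le_iff_ne_zero.mpr (Nat.mul_ne_zero (by omega) (by omega))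
    have hlat := lattice_sum_le d hd q hq0 hq2 (m * L) hmL1
    rw [← hCS] at hlat
    have hmL : ((m * L : ℕ) : ℝ) ^ ((d : ℝ) - q)
        = (m : ℝ) ^ ((d : ℝ) - q) * (L : ℝ) ^ ((d : ℝ) - q) := by
      rw [Nat.cast_mul]
      exact Real.mul_rpow (Nat.cast_nonneg m) (Nat.cast_nonneg L)
    have hinv : ((2 * (L : ℝ) + 1) ^ d)⁻¹ ≤ (2 : ℝ) ^ (-(d : ℝ)) * (L : ℝ) ^ (-(d : ℝ)) := by
      have h1 : (2 * (L : ℝ)) ^ d ≤ (2 * (L : ℝ) + 1) ^ d :=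
        pow_le_pow_left₀ (by positivity) (by linarith) d
      have h2 : ((2 * (L : ℝ) + 1) ^ d)⁻¹ ≤ ((2 * (L : ℝ)) ^ d)⁻¹ :=
        inv_anti₀ (by positivity) h1
      have h3 : ((2 * (L : ℝ)) ^ d)⁻¹ = (2 : ℝ) ^ (-(d : ℝ)) * (L : ℝ) ^ (-(d : ℝ)) := by
        rw [mul_pow, mul_inv, ← Real.rpow_natCast (2 : ℝ) d, ← Real.rpow_natCast ((L : ℝ)) d,
          ← Real.rpow_neg (by norm_num : (0:ℝ) ≤ 2), ← Real.rpow_neg hLr.le]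
      rw [h3] at h2
      exact h2
    have hLq : (L : ℝ) ^ (-(d : ℝ)) * (L : ℝ) ^ ((d : ℝ) - q) = (L : ℝ) ^ (-q) := by
      rw [← Real.rpow_add hLr]
      ring_nf
    have h2snn : (0:ℝ) ≤ (2 * s) ^ q := Real.rpow_nonneg (by positivity) _
    have hLx : (L : ℝ) ^ (-q) ≤ (2 * s) ^ q * jnorm x ^ (-q) := by
      have h1 : (2 * s * (L : ℝ)) ^ (-q) ≤ jnorm x ^ (-q) :=
        Real.rpow_le_rpow_of_nonpos (by positivity) hcase (by linarith)
      have h2 : (2 * s * (L : ℝ)) ^ (-q) = (2 * s) ^ (-q) * (L : ℝ) ^ (-q) :=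
        Real.mul_rpow (by positivity) hLr.le
      have h3 : (2 * s) ^ q * (2 * s) ^ (-q) = 1 := by
        rw [← Real.rpow_add (by positivity)]
        simp
      have h4 : (2 * s) ^ (-q) * (L : ℝ) ^ (-q) ≤ jnorm x ^ (-q) := h2 ▸ h1
      calc (L : ℝ) ^ (-q) = (2 * s) ^ q * ((2 * s) ^ (-q) * (L : ℝ) ^ (-q)) := by
            rw [← mul_assoc, h3, one_mul]
        _ ≤ (2 * s) ^ q * jnorm x ^ (-q) := mul_le_mul_of_nonneg_left h4 h2snn
    have hC1 : (0:ℝ) ≤ (3 / 2) * ((2 * (L : ℝ) + 1) ^ d)⁻¹ * θ0 := by positivity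
    have h2dnn : (0:ℝ) ≤ (2 : ℝ) ^ (-(d : ℝ)) := Real.rpow_nonneg (by norm_num) _
    have hmnn : (0:ℝ) ≤ (m : ℝ) ^ ((d : ℝ) - q) := Real.rpow_nonneg (Nat.cast_nonneg m) _
    calc ∑ y ∈ Box d L, (if y ≠ x then Dunif d L y * G (x - y) else 0)
        ≤ ∑ y ∈ Box d L, (3 / 2) * ((2 * (L : ℝ) + 1) ^ d)⁻¹ * (θ0 * jnorm (x - y) ^ (-q)) :=
          Finset.sum_le_sum hterm
      _ = (3 / 2) * ((2 * (L : ℝ) + 1) ^ d)⁻¹ * θ0 * ∑ y ∈ Box d L, jnorm (x - y) ^ (-q) := by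
          rw [Finset.mul_sum]
          exact Finset.sum_congr rfl fun y _ => by ring
      _ ≤ (3 / 2) * ((2 * (L : ℝ) + 1) ^ d)⁻¹ * θ0 * (CS * ((m * L : ℕ) : ℝ) ^ ((d : ℝ) - q)) :=
          mul_le_mul_of_nonneg_left (le_trans himg hlat) hC1
      _ = (3 / 2) * θ0 * CS *
          (((2 * (L : ℝ) + 1) ^ d)⁻¹ * ((m : ℝ) ^ ((d : ℝ) - q) * (L : ℝ) ^ ((d : ℝ) - q))) := by
          rw [hmL]; ring
      _ ≤ (3 / 2) * θ0 * CS *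
          (((2 : ℝ) ^ (-(d : ℝ)) * (L : ℝ) ^ (-(d : ℝ))) *
            ((m : ℝ) ^ ((d : ℝ) - q) * (L : ℝ) ^ ((d : ℝ) - q))) := by
          apply mul_le_mul_of_nonneg_left
          · apply mul_le_mul_of_nonneg_right hinv
            exact mul_nonneg hmnn (Real.rpow_nonneg hLr.le _)
          · exact mul_nonneg (mul_nonneg (by norm_num) hθ0.le) hCS0.le
      _ = (3 / 2) * θ0 * CS * (2 : ℝ) ^ (-(d : ℝ)) * (m : ℝ) ^ ((d : ℝ) - q) *
          ((L : ℝ) ^ (-(d : ℝ)) * (L : ℝ) ^ ((d : ℝ) - q)) := by ring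
      _ = (3 / 2) * θ0 * CS * (2 : ℝ) ^ (-(d : ℝ)) * (m : ℝ) ^ ((d : ℝ) - q) * (L : ℝ) ^ (-q) := by
          rw [hLq]
      _ ≤ (3 / 2) * θ0 * CS * (2 : ℝ) ^ (-(d : ℝ)) * (m : ℝ) ^ ((d : ℝ) - q) *
          ((2 * s) ^ q * jnorm x ^ (-q)) := by
          apply mul_le_mul_of_nonneg_left hLx
          exact mul_nonneg (mul_nonneg (mul_nonneg (mul_nonneg (by norm_num) hθ0.le) hCS0.le)
            h2dnn) hmnn
      _ = KA * θ0 * jnorm x ^ (-q) := by rw [hKA]; ring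
      _ ≤ (KA + (3 / 2) * (2 : ℝ) ^ q) * θ0 * jnorm x ^ (-q) := by
          have h5 : (0:ℝ) ≤ θ0 * jnorm x ^ (-q) := mul_nonneg hθ0.le hjxq
          nlinarith [h2q, h5]
  · -- Case B : large x
    have hxnorm : ‖ev x‖ = jnorm x := by
      have h1 : 1 < jnorm x := by nlinarith
      rcases le_or_gt ‖ev x‖ 1 with h | h
      · exfalso
        have : jnorm x = 1 := by rw [jnorm_eq]; exact max_eq_right h
        rw [this] at h1; exact lt_irrefl _ h1
      · rw [jnorm_eq]; exact (max_eq_left h.le).symm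
    set C : ℝ := θ0 * ((2 : ℝ) ^ q * jnorm x ^ (-q)) with hC
    have hCnn : 0 ≤ C := by
      rw [hC]
      exact mul_nonneg hθ0.le (mul_nonneg (Real.rpow_nonneg (by norm_num) _) hjxq)
    have hterm : ∀ y ∈ Box d L, (if y ≠ x then Dunif d L y * G (x - y) else 0)
        ≤ Dunif d L y * C := by
      intro y _
      split
      case isFalse _ => exact mul_nonneg (hDnn y) hCnn
      case isTrue hyx =>
        by_cases hcond : y ≠ 0 ∧ ∀ i, |y i| ≤ (L : ℤ)
        · have hevy : ‖ev y‖ ≤ s * (L : ℝ) := by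
            have hptw : ∀ i : Fin d, ‖ev y i‖ ^ 2 ≤ (L : ℝ) ^ 2 := by
              intro i
              have hyi' : |((y i : ℤ) : ℝ)| ≤ (L : ℝ) := by exact_mod_cast hcond.2 i
              have hne : ‖ev y i‖ = |((y i : ℤ) : ℝ)| := Real.norm_eq_abs _
              rw [hne]
              exact pow_le_pow_left₀ (abs_nonneg _) hyi' 2
            have hsum : ∑ i, ‖ev y i‖ ^ 2 ≤ (d : ℝ) * (L : ℝ) ^ 2 := by
              calc ∑ i, ‖ev y i‖ ^ 2 ≤ ∑ _i : Fin d, (L : ℝ) ^ 2 :=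
                    Finset.sum_le_sum fun i _ => hptw i
                _ = (d : ℝ) * (L : ℝ) ^ 2 := by
                    rw [Finset.sum_const, Finset.card_univ, Fintype.card_fin, nsmul_eq_mul]
            rw [EuclideanSpace.norm_eq]
            have h1 : Real.sqrt (∑ i, ‖ev y i‖ ^ 2) ≤ Real.sqrt ((d : ℝ) * (L : ℝ) ^ 2) :=
              Real.sqrt_le_sqrt hsum
            have h2 : Real.sqrt ((d : ℝ) * (L : ℝ) ^ 2) = s * (L : ℝ) := by
              rw [Real.sqrt_mul (Nat.cast_nonneg d), Real.sqrt_sq hLr.le, hs]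
            linarith
          have hlow : jnorm x / 2 ≤ jnorm (x - y) := by
            have h1 : ‖ev x‖ - ‖ev y‖ ≤ ‖ev x - ev y‖ := norm_sub_norm_le _ _
            have h2 : ‖ev (x - y)‖ = ‖ev x - ev y‖ := by rw [ev_sub]
            have h3 : s * (L : ℝ) ≤ jnorm x / 2 := by nlinarith
            have h4 := norm_ev_le_jnorm (x - y)
            rw [hxnorm] at h1
            linarith
          have hq' : jnorm (x - y) ^ (-q) ≤ (2 : ℝ) ^ q * jnorm x ^ (-q) := by
            have h1 : jnorm (x - y) ^ (-q) ≤ (jnorm x / 2) ^ (-q) :=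
              Real.rpow_le_rpow_of_nonpos (by positivity) hlow (by linarith)
            have h2 : (jnorm x / 2) ^ (-q) = (2 : ℝ) ^ q * jnorm x ^ (-q) := by
              rw [Real.div_rpow hjx.le (by norm_num : (0:ℝ) ≤ 2), Real.rpow_neg
                (by norm_num : (0:ℝ) ≤ 2)]
              field_simp
            rw [h2] at h1
            exact h1
          have hGxy : G (x - y) ≤ C := by
            have h0 := hGb (x - y)
            rw [if_neg (sub_ne_zero.mpr (Ne.symm hyx))] at h0
            have h5 := mul_le_mul_of_nonneg_left hq' hθ0.le
            rw [hC]
            linarith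
          exact mul_le_mul_of_nonneg_left hGxy (hDnn y)
        · have h0 : Dunif d L y = 0 := by rw [Dunif, if_neg hcond]
          rw [h0, zero_mul, zero_mul]
    have hDsum : ∑ y ∈ Box d L, Dunif d L y ≤ 3 / 2 := by
      calc ∑ y ∈ Box d L, Dunif d L y
          ≤ ∑ _y ∈ Box d L, (3 / 2) * ((2 * (L : ℝ) + 1) ^ d)⁻¹ :=
            Finset.sum_le_sum fun y _ => hD y
        _ = ((Box d L).card : ℝ) * ((3 / 2) * ((2 * (L : ℝ) + 1) ^ d)⁻¹) := by
            rw [Finset.sum_const, nsmul_eq_mul]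
        _ = 3 / 2 := by
            rw [card_Box]
            push_cast
            field_simp
    calc ∑ y ∈ Box d L, (if y ≠ x then Dunif d L y * G (x - y) else 0)
        ≤ ∑ y ∈ Box d L, Dunif d L y * C := Finset.sum_le_sum hterm
      _ = (∑ y ∈ Box d L, Dunif d L y) * C := by rw [Finset.sum_mul]
      _ ≤ (3 / 2) * C := mul_le_mul_of_nonneg_right hDsum hCnn
      _ = (3 / 2) * (2 : ℝ) ^ q * θ0 * jnorm x ^ (-q) := by rw [hC]; ring
      _ ≤ (KA + (3 / 2) * (2 : ℝ) ^ q) * θ0 * jnorm x ^ (-q) := by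
          have h5 : (0:ℝ) ≤ θ0 * jnorm x ^ (-q) := mul_nonneg hθ0.le hjxq
          nlinarith [hKA0, h5]
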